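/- arXiv:1212.1650 — 3 statements merged into one kernel-verified Lean document; each statement's English description precedes it below -/
import Mathlib

section
/- The 7-dimensional filiform Lie algebra F_7^4 with nonzero brackets [x_1,x_i] = x_{i+1} for i = 2,...,6, [x_2,x_3] = x_6, [x_2,x_4] = x_7, [x_2,x_5] = x_7, [x_3,x_4] = −x_7 has index 1. -/
/-!
The centre of `F_7^4` is the line `K ∙ x₇`, and the centre lies in the stabilizer of every
functional, so the index is at least `1`. For the dual functional `f = x₇*`, the Gram matrix of the
Kirillov form `(u, v) ↦ f ⁅u, v⁆` in the basis `x₁, …, x₇` has kernel spanned by the last basis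
vector, so the stabilizer of `f` is exactly the centre.
-/

open Module

noncomputable def lieStab (K : Type*) {L : Type*} [Field K] [LieRing L] [LieAlgebra K L]
    (f : Module.Dual K L) : Submodule K L where
  carrier := {x | ∀ y, f ⁅x, y⁆ = 0}
  add_mem' := by
    intro a b ha hb y
    rw [add_lie, map_add, ha y, hb y, add_zero]
  zero_mem' := by intro y; simp
  smul_mem' := by
    intro t a ha y
    rw [smul_lie, map_smul, ha y, smul_zero]

noncomputable def lieIndex (K L : Type*) [Field K] [LieRing L] [LieAlgebra K L] : ℕ :=
  ⨅ f : Module.Dual K L, Module.finrank K (lieStab K f)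

section General

variable {K L : Type*} [Field K] [LieRing L] [LieAlgebra K L]

theorem lieIndex_le_finrank_lieStab (f : Module.Dual K L) :
    lieIndex K L ≤ finrank K (lieStab K f) :=
  ciInf_le (OrderBot.bddBelow _) f

theorem center_le_lieStab (f : Module.Dual K L) :
    (LieAlgebra.center K L).toSubmodule ≤ lieStab K f := fun z hz y => by
  rw [LieSubmodule.mem_toSubmodule, LieModule.mem_maxTrivSubmodule] at hz
  rw [← lie_skew, hz y, neg_zero, map_zero]

theorem finrank_center_le_lieIndex [FiniteDimensional K L] :
    finrank K (LieAlgebra.center K L).toSubmodule ≤ lieIndex K L :=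
  le_ciInf fun f => Submodule.finrank_mono (center_le_lieStab f)

theorem lieIndex_eq_finrank_center [FiniteDimensional K L] {f : Module.Dual K L}
    (hf : lieStab K f ≤ (LieAlgebra.center K L).toSubmodule) :
    lieIndex K L = finrank K (LieAlgebra.center K L).toSubmodule := by
  refine le_antisymm ?_ finrank_center_le_lieIndex
  rw [← le_antisymm hf (center_le_lieStab f)]
  exact lieIndex_le_finrank_lieStab f

theorem mem_center_of_span_eq_top {ι : Type*} {v : ι → L}
    (hv : Submodule.span K (Set.range v) = ⊤) {z : L} (hz : ∀ i, ⁅v i, z⁆ = 0) :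
    z ∈ LieAlgebra.center K L := by
  have : (LieModule.toEnd K L L).flip z = 0 := LinearMap.ext_on_range hv hz
  exact (LieModule.mem_maxTrivSubmodule K L L z).2 fun y => LinearMap.congr_fun this y

theorem mem_lieStab_iff_vecMul {ι : Type*} [Fintype ι] (b : Basis ι K L) (f : Module.Dual K L)
    (v : L) : v ∈ lieStab K f ↔ Matrix.vecMul (b.repr v) (fun i j => f ⁅b i, b j⁆) = 0 := by
  have hexpand (j : ι) :
      f ⁅v, b j⁆ = Matrix.vecMul (b.repr v) (fun i j => f ⁅b i, b j⁆) j := by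
    calc f ⁅v, b j⁆ = f ⁅∑ i, b.repr v i • b i, b j⁆ := by rw [b.sum_repr]
      _ = _ := by simp only [sum_lie, smul_lie, map_sum, map_smul, smul_eq_mul]; rfl
  have hext : v ∈ lieStab K f ↔ f ∘ₗ LieModule.toEnd K L L v = 0 := by
    rw [LinearMap.ext_iff]; rfl
  rw [hext, funext_iff]
  simp only [← hexpand, Pi.zero_apply]
  exact ⟨fun h j => LinearMap.congr_fun h (b j), fun h => b.ext h⟩

theorem Module.Basis.mem_span_singleton_of_repr_eq_zero {ι : Type*} [Fintype ι]
    (b : Basis ι K L) {k : ι} {v : L} (hv : ∀ i ≠ k, b.repr v i = 0) : v ∈ K ∙ b k := by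
  rw [Submodule.mem_span_singleton]
  refine ⟨b.repr v k, ?_⟩
  conv_rhs => rw [← b.sum_repr v]
  exact (Fintype.sum_eq_single (f := fun i => b.repr v i • b i) k
    fun i hi => by rw [hv i hi, zero_smul]).symm

end General

namespace F74

variable {K L : Type*} [Field K] [LieRing L] [LieAlgebra K L]

/-- Entry `(i, j)` is `x₇* ⁅x_{i+1}, x_{j+1}⁆`: rows and columns are indexed from `0`. -/
def kirillovMatrix : Matrix (Fin 7) (Fin 7) K :=
  !![0, 0, 0, 0, 0, 1, 0;
     0, 0, 0, 1, 1, 0, 0;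
     0, 0, 0, -1, 0, 0, 0;
     0, -1, 1, 0, 0, 0, 0;
     0, -1, 0, 0, 0, 0, 0;
     -1, 0, 0, 0, 0, 0, 0;
     0, 0, 0, 0, 0, 0, 0]

theorem eq_zero_of_vecMul_kirillovMatrix_eq_zero {a : Fin 7 → K}
    (ha : Matrix.vecMul a kirillovMatrix = 0) (i : Fin 7) (hi : i ≠ 6) : a i = 0 := by
  have e (j : Fin 7) : ∑ k, a k * kirillovMatrix k j = 0 := congrFun ha j
  have e0 := e 0; have e1 := e 1; have e2 := e 2; have e3 := e 3; have e4 := e 4; have e5 := e 5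
  simp only [kirillovMatrix, Fin.isValue, Matrix.of_apply, Matrix.cons_val', Matrix.cons_val_zero,
    Matrix.cons_val_fin_one, Fin.sum_univ_seven, mul_zero, Matrix.cons_val_one, add_zero,
    Matrix.cons_val, mul_neg, mul_one, zero_add, neg_eq_zero] at e0 e1 e2 e3 e4 e5
  have h2 : a 2 = 0 := by linear_combination e4 - e3
  have h4 : a 4 = 0 := by linear_combination -e1 - e2
  fin_cases i
  exacts [e5, e4, h2, e2, h4, e0, absurd rfl hi]

theorem mem_center {x : ℕ → L}
    (hsp : Submodule.span K (Set.range fun i : Fin 7 => x (i.1 + 1)) = ⊤)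
    (hz : ∀ i j, 1 ≤ i → i ≤ 7 → 1 ≤ j → j ≤ 7 →
      ¬(i = 1 ∧ 2 ≤ j ∧ j ≤ 6) → ¬(j = 1 ∧ 2 ≤ i ∧ i ≤ 6) → ¬(i = 2 ∧ j = 3) →
      ¬(i = 3 ∧ j = 2) → ¬(i = 2 ∧ j = 4) → ¬(i = 4 ∧ j = 2) → ¬(i = 2 ∧ j = 5) →
      ¬(i = 5 ∧ j = 2) → ¬(i = 3 ∧ j = 4) → ¬(i = 4 ∧ j = 3) → ⁅x i, x j⁆ = 0) :
    x 7 ∈ LieAlgebra.center K L :=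
  mem_center_of_span_eq_top hsp fun i => by fin_cases i <;> simp (disch := omega) [hz]

theorem apply_lie_eq_kirillovMatrix {x : ℕ → L} {f : Module.Dual K L}
    (hf : ∀ k, 1 ≤ k → k ≤ 7 → f (x k) = if k = 7 then 1 else 0)
    (hbr1 : ∀ i, 2 ≤ i → i ≤ 6 → ⁅x 1, x i⁆ = x (i + 1))
    (hbr2 : ⁅x 2, x 3⁆ = x 6) (hbr3 : ⁅x 2, x 4⁆ = x 7) (hbr4 : ⁅x 2, x 5⁆ = x 7)
    (hbr5 : ⁅x 3, x 4⁆ = -x 7)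
    (hz : ∀ i j, 1 ≤ i → i ≤ 7 → 1 ≤ j → j ≤ 7 →
      ¬(i = 1 ∧ 2 ≤ j ∧ j ≤ 6) → ¬(j = 1 ∧ 2 ≤ i ∧ i ≤ 6) → ¬(i = 2 ∧ j = 3) →
      ¬(i = 3 ∧ j = 2) → ¬(i = 2 ∧ j = 4) → ¬(i = 4 ∧ j = 2) → ¬(i = 2 ∧ j = 5) →
      ¬(i = 5 ∧ j = 2) → ¬(i = 3 ∧ j = 4) → ¬(i = 4 ∧ j = 3) → ⁅x i, x j⁆ = 0)
    (i j : Fin 7) :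
    f ⁅x (i + 1), x (j + 1)⁆ = kirillovMatrix i j := by
  have hbr1' (i : ℕ) (h₂ : 2 ≤ i) (h₆ : i ≤ 6) : ⁅x i, x 1⁆ = -x (i + 1) := by
    rw [← lie_skew, hbr1 i h₂ h₆]
  fin_cases i <;> fin_cases j <;>
    simp (disch := omega) [kirillovMatrix, hf, hbr1, hbr1', hbr2, hbr3, hbr4, hbr5, hz,
      ← lie_skew (x 3) (x 2), ← lie_skew (x 4) (x 2), ← lie_skew (x 5) (x 2),
      ← lie_skew (x 4) (x 3)]

end F74

theorem stmt13_general (K : Type*) [Field K]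
    (L : Type*) [LieRing L] [LieAlgebra K L]
    (x : ℕ → L)
    (hli : LinearIndependent K fun i : Fin 7 => x (i.1 + 1))
    (hsp : Submodule.span K (Set.range fun i : Fin 7 => x (i.1 + 1)) = ⊤)
    (hbr1 : ∀ i, 2 ≤ i → i ≤ 6 → ⁅x 1, x i⁆ = x (i + 1))
    (hbr2 : ⁅x 2, x 3⁆ = x 6)
    (hbr3 : ⁅x 2, x 4⁆ = x 7)
    (hbr4 : ⁅x 2, x 5⁆ = x 7)
    (hbr5 : ⁅x 3, x 4⁆ = -x 7)
    (hz : ∀ i j, 1 ≤ i → i ≤ 7 → 1 ≤ j → j ≤ 7 →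
      ¬(i = 1 ∧ 2 ≤ j ∧ j ≤ 6) → ¬(j = 1 ∧ 2 ≤ i ∧ i ≤ 6) → ¬(i = 2 ∧ j = 3) → ¬(i = 3 ∧ j = 2) → ¬(i = 2 ∧ j = 4) → ¬(i = 4 ∧ j = 2) → ¬(i = 2 ∧ j = 5) → ¬(i = 5 ∧ j = 2) → ¬(i = 3 ∧ j = 4) → ¬(i = 4 ∧ j = 3) →
      ⁅x i, x j⁆ = 0) :
    lieIndex K L = 1 := by
  let b : Basis (Fin 7) K L := Basis.mk hli hsp.ge
  have : FiniteDimensional K L := Module.Finite.of_basis b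
  have hb (i : Fin 7) : b i = x (i + 1) := Basis.mk_apply _ _ i
  let f := b.coord 6
  have hf (k : ℕ) (h₁ : 1 ≤ k) (h₇ : k ≤ 7) : f (x k) = if k = 7 then 1 else 0 := by
    obtain ⟨i, rfl⟩ : ∃ i : Fin 7, i.1 + 1 = k := ⟨⟨k - 1, by omega⟩, Nat.sub_add_cancel h₁⟩
    simp [f, ← hb, Finsupp.single_apply, Fin.ext_iff]
  have hstab : lieStab K f ≤ K ∙ x 7 := fun v hv => by
    have hgram : (fun i j => f ⁅b i, b j⁆) = F74.kirillovMatrix := by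
      ext i j
      simpa only [hb] using
        F74.apply_lie_eq_kirillovMatrix hf hbr1 hbr2 hbr3 hbr4 hbr5 hz i j
    rw [mem_lieStab_iff_vecMul b, hgram] at hv
    rw [show x 7 = b 6 from (hb 6).symm]
    exact b.mem_span_singleton_of_repr_eq_zero (F74.eq_zero_of_vecMul_kirillovMatrix_eq_zero hv)
  have hcenter : (LieAlgebra.center K L).toSubmodule = K ∙ x 7 :=
    le_antisymm ((center_le_lieStab f).trans hstab)
      ((Submodule.span_singleton_le_iff_mem _ _).2 (F74.mem_center hsp hz))
  rw [lieIndex_eq_finrank_center (hstab.trans hcenter.ge), hcenter]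
  exact finrank_span_singleton (hli.ne_zero 6)

theorem stmt13 (K : Type*) [Field K] [IsAlgClosed K] [CharZero K]
    (L : Type*) [LieRing L] [LieAlgebra K L]
    (x : ℕ → L)
    (hli : LinearIndependent K fun i : Fin 7 => x (i.1 + 1))
    (hsp : Submodule.span K (Set.range fun i : Fin 7 => x (i.1 + 1)) = ⊤)
    (hbr1 : ∀ i, 2 ≤ i → i ≤ 6 → ⁅x 1, x i⁆ = x (i + 1))
    (hbr2 : ⁅x 2, x 3⁆ = x 6)
    (hbr3 : ⁅x 2, x 4⁆ = x 7)
    (hbr4 : ⁅x 2, x 5⁆ = x 7)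
    (hbr5 : ⁅x 3, x 4⁆ = -x 7)
    (hz : ∀ i j, 1 ≤ i → i ≤ 7 → 1 ≤ j → j ≤ 7 →
      ¬(i = 1 ∧ 2 ≤ j ∧ j ≤ 6) → ¬(j = 1 ∧ 2 ≤ i ∧ i ≤ 6) → ¬(i = 2 ∧ j = 3) → ¬(i = 3 ∧ j = 2) → ¬(i = 2 ∧ j = 4) → ¬(i = 4 ∧ j = 2) → ¬(i = 2 ∧ j = 5) → ¬(i = 5 ∧ j = 2) → ¬(i = 3 ∧ j = 4) → ¬(i = 4 ∧ j = 3) →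
      ⁅x i, x j⁆ = 0) :
    lieIndex K L = 1 :=
  stmt13_general K L x hli hsp hbr1 hbr2 hbr3 hbr4 hbr5 hz
end

section
/- For n ≥ 7 odd and r odd with 3 ≤ r ≤ n−4, the index of the graded quasi-filiform Lie algebra Q_{(n,r)} equals 3. -/
/-!
The stabiliser of `f` is the radical of the alternating form `(u, v) ↦ f ⁅u, v⁆`. It contains the
central plane `Z` spanned by `x (n - 2)` and `x (n - 1)`; as `dim L - dim Z = n - 2` is odd, the
form restricted to a complement of `Z` is degenerate, so every stabiliser has dimension at least 3.
For `f` the coordinate of `x (n - 2)`, the value `f ⁅x i, x j⁆` vanishes unless `i + j = n - 2` or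
`{i, j} = {0, n - 3}`, which forces a stabilising vector into the span of `x 0 - x 1`, `x (n - 2)`
and `x (n - 1)`.
-/

open Module

open scoped Matrix

namespace LinearMap.BilinForm

variable {K V : Type*} [Field K] [NeZero (2 : K)] [AddCommGroup V] [Module K V]
  [FiniteDimensional K V]

theorem det_toMatrix_eq_zero_of_isAlt {B : LinearMap.BilinForm K V} (hB : B.IsAlt)
    (hodd : Odd (finrank K V)) : (toMatrix (Module.finBasis K V) B).det = 0 := by
  set M := toMatrix (Module.finBasis K V) B
  have hskew : Mᵀ = -M := by
    ext i j
    simp only [M, Matrix.transpose_apply, Matrix.neg_apply, toMatrix_apply]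
    exact (LinearMap.IsAlt.neg hB _ _).symm
  have h := congrArg Matrix.det hskew
  rw [Matrix.det_transpose, Matrix.det_neg, Fintype.card_fin, hodd.neg_one_pow, neg_one_mul,
    eq_neg_iff_add_eq_zero, ← two_mul] at h
  exact (mul_eq_zero.mp h).resolve_left two_ne_zero

theorem exists_ne_zero_forall_eq_zero_of_isAlt {B : LinearMap.BilinForm K V} (hB : B.IsAlt)
    (hodd : Odd (finrank K V)) : ∃ u ≠ 0, ∀ v, B u v = 0 := by
  by_contra! h
  have hsep : B.SeparatingLeft := fun u hu => by
    by_contra hu0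
    obtain ⟨v, hv⟩ := h u hu0
    exact hv (hu v)
  exact Matrix.separatingLeft_iff_det_ne_zero.mp (SeparatingLeft.toMatrix hsep (finBasis K V))
    (det_toMatrix_eq_zero_of_isAlt hB hodd)

end LinearMap.BilinForm

section LieStab

variable {K L : Type*} [Field K] [LieRing L] [LieAlgebra K L]

noncomputable def lieForm (f : Dual K L) : LinearMap.BilinForm K L :=
  (LieModule.toEnd K L L : L →ₗ[K] Module.End K L).compr₂ f

@[simp]
theorem lieForm_apply (f : Dual K L) (u v : L) : lieForm f u v = f ⁅u, v⁆ := rfl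

theorem lieForm_isAlt (f : Dual K L) : (lieForm f).IsAlt := fun u => by simp

theorem apply_lie_eq_sum_repr {ι : Type*} [Fintype ι] (b : Basis ι K L) (f : Dual K L)
    (v y : L) :
    f ⁅v, y⁆ = ∑ i, b.repr v i * f ⁅b i, y⁆ := by
  conv_lhs => rw [← b.sum_repr v]
  simp_rw [sum_lie, map_sum, smul_lie, map_smul, smul_eq_mul]

theorem mem_center_of_basis {ι : Type*} (b : Basis ι K L) {z : L} (hz : ∀ i, ⁅b i, z⁆ = 0) :
    z ∈ LieAlgebra.center K L := by
  have h : LieModule.toEnd K L L z = 0 := b.ext fun i => by simp [← lie_skew z, hz i]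
  refine (LieModule.mem_maxTrivSubmodule K L L z).mpr fun y => ?_
  rw [← lie_skew, ← LieModule.toEnd_apply_apply K, h, LinearMap.zero_apply, neg_zero]

theorem finrank_lt_finrank_lieStab [NeZero (2 : K)] [FiniteDimensional K L] {Z : Submodule K L}
    (hZ : Z ≤ (LieAlgebra.center K L).toSubmodule) (hodd : Odd (finrank K L - finrank K Z))
    (f : Dual K L) :
    finrank K Z < finrank K (lieStab K f) := by
  obtain ⟨V, hZV⟩ := Z.exists_isCompl
  have hV : Odd (finrank K V) := by
    rwa [← Submodule.finrank_add_eq_of_isCompl hZV, add_tsub_cancel_left] at hodd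
  obtain ⟨u, hu0, hu⟩ := LinearMap.BilinForm.exists_ne_zero_forall_eq_zero_of_isAlt
    (B := (lieForm f).restrict V) (fun v => lieForm_isAlt f v) hV
  have hZ_central : ∀ z ∈ Z, ∀ y : L, ⁅y, z⁆ = 0 := fun z hz =>
    (LieModule.mem_maxTrivSubmodule K L L z).mp (hZ hz)
  have hZ_le : Z ≤ lieStab K f := fun z hz y => by
    rw [← lie_skew, hZ_central z hz y, neg_zero, map_zero]
  have hu_mem : (u : L) ∈ lieStab K f := by
    intro y
    obtain ⟨z, hz, v, hv, rfl⟩ :=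
      Submodule.mem_sup.mp (hZV.sup_eq_top ▸ Submodule.mem_top : y ∈ Z ⊔ V)
    have huv : f ⁅(u : L), v⁆ = 0 := by simpa using hu ⟨v, hv⟩
    rw [lie_add, map_add, hZ_central z hz, map_zero, zero_add, huv]
  have hu_not_mem : (u : L) ∉ Z := fun h =>
    hu0 (Subtype.ext (Submodule.disjoint_def.mp hZV.disjoint _ h u.2))
  exact Submodule.finrank_lt_finrank_of_lt
    (SetLike.lt_iff_le_and_exists.mpr ⟨hZ_le, (u : L), hu_mem, hu_not_mem⟩)

end LieStab

structure IsQuasiFiliformBasis (K : Type*) {L : Type*} [Field K] [LieRing L] [LieAlgebra K L]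
    (n r : ℕ) (x : ℕ → L) : Prop where
  linearIndependent : LinearIndependent K fun i : Fin n => x i.1
  span_eq_top : Submodule.span K (Set.range fun i : Fin n => x i.1) = ⊤
  lie_x_zero : ∀ i, 1 ≤ i → i ≤ n - 3 → ⁅x 0, x i⁆ = x (i + 1)
  lie_r_sub : ∀ i, 1 ≤ i → i ≤ (r - 1) / 2 →
    ⁅x i, x (r - i)⁆ = ((-1 : K)) ^ (i - 1) • x (n - 1)
  lie_n_sub_two_sub : ∀ i, 1 ≤ i → i ≤ (n - 3) / 2 →
    ⁅x i, x (n - 2 - i)⁆ = ((-1 : K)) ^ (i - 1) • x (n - 2)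
  lie_eq_zero : ∀ i j, i ≤ n - 1 → j ≤ n - 1 →
    ¬(i = 0 ∧ 1 ≤ j ∧ j ≤ n - 3) → ¬(j = 0 ∧ 1 ≤ i ∧ i ≤ n - 3) →
    ¬(1 ≤ i ∧ i ≤ (r - 1) / 2 ∧ j = r - i) → ¬(1 ≤ j ∧ j ≤ (r - 1) / 2 ∧ i = r - j) →
    ¬(1 ≤ i ∧ i ≤ (n - 3) / 2 ∧ j = n - 2 - i) → ¬(1 ≤ j ∧ j ≤ (n - 3) / 2 ∧ i = n - 2 - j) →
    ⁅x i, x j⁆ = 0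

namespace IsQuasiFiliformBasis

variable {K L : Type*} [Field K] [LieRing L] [LieAlgebra K L] {n r : ℕ} {x : ℕ → L}

noncomputable def basis (hQ : IsQuasiFiliformBasis K n r x) : Basis (Fin n) K L :=
  Basis.mk hQ.linearIndependent hQ.span_eq_top.ge

@[simp]
theorem basis_apply (hQ : IsQuasiFiliformBasis K n r x) (i : Fin n) : hQ.basis i = x i :=
  Basis.mk_apply _ _ i

theorem repr_x (hQ : IsQuasiFiliformBasis K n r x) {k : ℕ} (hk : k < n) :
    hQ.basis.repr (x k) = Finsupp.single ⟨k, hk⟩ 1 := by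
  rw [← hQ.basis_apply ⟨k, hk⟩, Basis.repr_self]

theorem finrank_eq (hQ : IsQuasiFiliformBasis K n r x) : finrank K L = n := by
  rw [finrank_eq_card_basis hQ.basis, Fintype.card_fin]

theorem x_mem_center (hQ : IsQuasiFiliformBasis K n r x) (hn : 3 ≤ n) (hr : r ≤ n - 2) {j : ℕ}
    (hj : n - 2 ≤ j) (hjn : j < n) : x j ∈ LieAlgebra.center K L :=
  mem_center_of_basis hQ.basis fun i => by
    rw [basis_apply]
    exact hQ.lie_eq_zero i j (by omega) (by omega) (by omega) (by omega) (by omega) (by omega)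
      (by omega) (by omega)

theorem three_le_finrank_lieStab [NeZero (2 : K)] (hQ : IsQuasiFiliformBasis K n r x)
    (hn : 3 ≤ n) (hno : Odd n) (hr : r ≤ n - 2) (f : Dual K L) :
    3 ≤ finrank K (lieStab K f) := by
  have := hQ.basis.finiteDimensional_of_finite
  set Z := Submodule.span K (Set.range fun i : Fin 2 => x (n - 2 + i))
  have hZ : finrank K Z = 2 := by
    have hli : LinearIndependent K fun i : Fin 2 => x (n - 2 + i) :=
      hQ.linearIndependent.comp (fun i : Fin 2 => (⟨n - 2 + i, by omega⟩ : Fin n))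
        fun i j h => Fin.ext (by simpa using congrArg Fin.val h)
    rw [finrank_span_eq_card hli, Fintype.card_fin]
  have hZ_central : Z ≤ (LieAlgebra.center K L).toSubmodule :=
    Submodule.span_le.mpr <| Set.range_subset_iff.mpr fun i =>
      hQ.x_mem_center hn hr (by omega) (by omega)
  have hodd : Odd (finrank K L - finrank K Z) := by
    rw [hQ.finrank_eq, hZ]
    obtain ⟨m, rfl⟩ := hno
    exact ⟨m - 1, by omega⟩
  have hlt := finrank_lt_finrank_lieStab hZ_central hodd f
  omega

theorem lie_n_sub_two_sub_of_odd (hQ : IsQuasiFiliformBasis K n r x) (hno : Odd n) {k : ℕ}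
    (hk1 : 1 ≤ k) (hk : k ≤ n - 3) : ⁅x k, x (n - 2 - k)⁆ = (-1 : K) ^ (k - 1) • x (n - 2) := by
  by_cases hkn : k ≤ (n - 3) / 2
  · exact hQ.lie_n_sub_two_sub k hk1 hkn
  obtain ⟨m, rfl⟩ := hno
  obtain ⟨j, hj1, hjn, rfl⟩ : ∃ j, 1 ≤ j ∧ j ≤ (2 * m + 1 - 3) / 2 ∧ k = 2 * m + 1 - 2 - j :=
    ⟨2 * m + 1 - 2 - k, by omega, by omega, by omega⟩
  have hodd : Odd (2 * m + 1 - 2 * j - 2) := ⟨m - j - 1, by omega⟩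
  rw [show 2 * m + 1 - 2 - (2 * m + 1 - 2 - j) = j by omega, ← lie_skew,
    hQ.lie_n_sub_two_sub j hj1 hjn, ← neg_smul,
    show 2 * m + 1 - 2 - j - 1 = (j - 1) + (2 * m + 1 - 2 * j - 2) by omega, pow_add,
    hodd.neg_one_pow, mul_neg_one]

theorem apply_lie_x_eq_zero (hQ : IsQuasiFiliformBasis K n r x) (hn : 4 ≤ n)
    {f : Dual K L} (hf : ∀ k < n, f (x k) = if k = n - 2 then 1 else 0) {i j : ℕ} (hi : i < n)
    (hj : j < n) (hij : ¬(1 ≤ i ∧ i + j = n - 2)) (hi0 : ¬(i = 0 ∧ j = n - 3))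
    (hj0 : ¬(j = 0 ∧ i = n - 3)) : f ⁅x i, x j⁆ = 0 := by
  by_cases h0i : i = 0 ∧ 1 ≤ j ∧ j ≤ n - 3
  · obtain ⟨rfl, hj1, hj3⟩ := h0i
    rw [hQ.lie_x_zero j hj1 hj3, hf _ (by omega), if_neg (by omega)]
  by_cases h0j : j = 0 ∧ 1 ≤ i ∧ i ≤ n - 3
  · obtain ⟨rfl, hi1, hi3⟩ := h0j
    rw [← lie_skew, hQ.lie_x_zero i hi1 hi3, map_neg, hf _ (by omega), if_neg (by omega),
      neg_zero]
  by_cases hri : 1 ≤ i ∧ i ≤ (r - 1) / 2 ∧ j = r - i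
  · obtain ⟨hi1, hir, rfl⟩ := hri
    rw [hQ.lie_r_sub i hi1 hir, map_smul, hf _ (by omega), if_neg (by omega), smul_zero]
  by_cases hrj : 1 ≤ j ∧ j ≤ (r - 1) / 2 ∧ i = r - j
  · obtain ⟨hj1, hjr, rfl⟩ := hrj
    rw [← lie_skew, hQ.lie_r_sub j hj1 hjr, map_neg, map_smul, hf _ (by omega), if_neg (by omega),
      smul_zero, neg_zero]
  rw [hQ.lie_eq_zero i j (by omega) (by omega) h0i h0j hri hrj (by omega) (by omega), map_zero]

theorem apply_lie_x_eq_sum (hQ : IsQuasiFiliformBasis K n r x) (f : Dual K L) (v : L) (j : ℕ) :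
    f ⁅v, x j⁆ = ∑ i : Fin n, hQ.basis.repr v i * f ⁅x i, x j⁆ := by
  simpa using apply_lie_eq_sum_repr hQ.basis f v (x j)

theorem repr_eq_zero_of_mem_lieStab (hQ : IsQuasiFiliformBasis K n r x) (hn : 4 ≤ n)
    (hno : Odd n) {f : Dual K L}
    (hf : ∀ k < n, f (x k) = if k = n - 2 then 1 else 0) {v : L} (hv : v ∈ lieStab K f) {k : ℕ}
    (hk : k < n) (hk2 : 2 ≤ k) (hk3 : k ≤ n - 3) : hQ.basis.repr v ⟨k, hk⟩ = 0 := by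
  have h := hv (x (n - 2 - k))
  rw [hQ.apply_lie_x_eq_sum, Finset.sum_eq_single ⟨k, hk⟩ ?_ (by simp),
    hQ.lie_n_sub_two_sub_of_odd hno (by omega) hk3, map_smul, hf _ (by omega), if_pos rfl,
    smul_eq_mul, mul_one, mul_eq_zero] at h
  · exact h.resolve_right (pow_ne_zero _ (neg_ne_zero.mpr one_ne_zero))
  · intro i _ hik
    rw [hQ.apply_lie_x_eq_zero hn hf i.2 (by omega) ?_ (by omega) (by omega), mul_zero]
    exact fun h => hik (Fin.ext (by simp; omega))

theorem repr_zero_add_repr_one_of_mem_lieStab (hQ : IsQuasiFiliformBasis K n r x) (hn : 4 ≤ n)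
    (hno : Odd n) {f : Dual K L}
    (hf : ∀ k < n, f (x k) = if k = n - 2 then 1 else 0) {v : L} (hv : v ∈ lieStab K f) :
    hQ.basis.repr v ⟨0, by omega⟩ + hQ.basis.repr v ⟨1, by omega⟩ = 0 := by
  have h := hv (x (n - 3))
  rw [hQ.apply_lie_x_eq_sum, Fintype.sum_eq_add ⟨0, by omega⟩ ⟨1, by omega⟩ (by simp [Fin.ext_iff])
    ?_] at h
  · have h1 := hQ.lie_n_sub_two_sub_of_odd hno le_rfl (k := 1) (by omega)
    rw [show n - 2 - 1 = n - 3 by omega] at h1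
    rwa [hQ.lie_x_zero _ (by omega) le_rfl, show n - 3 + 1 = n - 2 by omega, h1, pow_zero,
      one_smul, hf _ (by omega), if_pos rfl, mul_one, mul_one] at h
  · intro i hi
    rw [hQ.apply_lie_x_eq_zero hn hf i.2 (by omega) ?_ ?_ (by omega), mul_zero]
    · exact fun h => hi.2 (Fin.ext (by simp; omega))
    · exact fun h => hi.1 (Fin.ext (by simp; omega))

theorem mem_span_of_repr (hQ : IsQuasiFiliformBasis K n r x) (hn : 4 ≤ n) {v : L}
    (hmid : ∀ k (hk : k < n), 2 ≤ k → k ≤ n - 3 → hQ.basis.repr v ⟨k, hk⟩ = 0)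
    (h01 : hQ.basis.repr v ⟨0, by omega⟩ + hQ.basis.repr v ⟨1, by omega⟩ = 0) :
    v ∈ Submodule.span K (Set.range ![x 0 - x 1, x (n - 2), x (n - 1)]) := by
  set c := hQ.basis.repr v
  have hv : v = c ⟨0, by omega⟩ • (x 0 - x 1) + c ⟨n - 2, by omega⟩ • x (n - 2)
      + c ⟨n - 1, by omega⟩ • x (n - 1) := by
    refine hQ.basis.ext_elem fun i => ?_
    obtain ⟨i, hi⟩ := i
    simp only [map_add, map_smul, map_sub, hQ.repr_x (show 0 < n by omega),
      hQ.repr_x (show 1 < n by omega), hQ.repr_x (show n - 2 < n by omega),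
      hQ.repr_x (show n - 1 < n by omega), Finsupp.add_apply, Finsupp.smul_apply,
      Finsupp.sub_apply, Finsupp.single_apply, Fin.ext_iff, smul_eq_mul]
    rcases (by omega : i = 0 ∨ i = 1 ∨ (2 ≤ i ∧ i ≤ n - 3) ∨ i = n - 2 ∨ i = n - 1) with
      rfl | rfl | hi' | rfl | rfl
    · simp [c, show n - 2 ≠ 0 by omega, show n - 1 ≠ 0 by omega]
    · simp [c, show n - 2 ≠ 1 by omega, show n - 1 ≠ 1 by omega]
      linear_combination h01
    · simp [show 0 ≠ i by omega, show 1 ≠ i by omega, show n - 2 ≠ i by omega,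
        show n - 1 ≠ i by omega]
      exact hmid i hi hi'.1 hi'.2
    · simp [c, show 0 ≠ n - 2 by omega, show 1 ≠ n - 2 by omega, show n - 1 ≠ n - 2 by omega]
    · simp [c, show 0 ≠ n - 1 by omega, show 1 ≠ n - 1 by omega, show n - 2 ≠ n - 1 by omega]
  rw [hv, Submodule.mem_span_range_iff_exists_fun]
  exact ⟨![c ⟨0, by omega⟩, c ⟨n - 2, by omega⟩, c ⟨n - 1, by omega⟩],
    by simp [Fin.sum_univ_three, add_assoc]⟩

theorem lieStab_le_span (hQ : IsQuasiFiliformBasis K n r x) (hn : 4 ≤ n) (hno : Odd n)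
    {f : Dual K L} (hf : ∀ k < n, f (x k) = if k = n - 2 then 1 else 0) :
    lieStab K f ≤ Submodule.span K (Set.range ![x 0 - x 1, x (n - 2), x (n - 1)]) := fun _ hv =>
  hQ.mem_span_of_repr hn
    (fun _ hk => hQ.repr_eq_zero_of_mem_lieStab hn hno hf hv hk)
    (hQ.repr_zero_add_repr_one_of_mem_lieStab hn hno hf hv)

theorem exists_finrank_lieStab_le_three (hQ : IsQuasiFiliformBasis K n r x) (hn : 4 ≤ n)
    (hno : Odd n) : ∃ f : Dual K L, finrank K (lieStab K f) ≤ 3 := by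
  have := hQ.basis.finiteDimensional_of_finite
  refine ⟨hQ.basis.coord ⟨n - 2, by omega⟩, ?_⟩
  have hf : ∀ k < n, hQ.basis.coord ⟨n - 2, by omega⟩ (x k) = if k = n - 2 then 1 else 0 := by
    intro k hk
    simp [Basis.coord_apply, hQ.repr_x hk, Finsupp.single_apply]
  calc finrank K (lieStab K _)
      ≤ finrank K (Submodule.span K (Set.range ![x 0 - x 1, x (n - 2), x (n - 1)])) :=
        Submodule.finrank_mono (hQ.lieStab_le_span hn hno hf)
    _ ≤ 3 := finrank_range_le_card _

end IsQuasiFiliformBasis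

theorem stmt16_general (K : Type*) [Field K] [CharZero K]
    (L : Type*) [LieRing L] [LieAlgebra K L]
    (n r : ℕ) (hn : 7 ≤ n) (hno : Odd n) (hr2 : r ≤ n - 4)
    (x : ℕ → L)
    (hli : LinearIndependent K fun i : Fin n => x i.1)
    (hsp : Submodule.span K (Set.range fun i : Fin n => x i.1) = ⊤)
    (hbr1 : ∀ i, 1 ≤ i → i ≤ n - 3 → ⁅x 0, x i⁆ = x (i + 1))
    (hbr2 : ∀ i, 1 ≤ i → i ≤ (r - 1) / 2 → ⁅x i, x (r - i)⁆ = ((-1 : K)) ^ (i - 1) • x (n - 1))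
    (hbr3 : ∀ i, 1 ≤ i → i ≤ (n - 3) / 2 →
      ⁅x i, x (n - 2 - i)⁆ = ((-1 : K)) ^ (i - 1) • x (n - 2))
    (hz : ∀ i j, i ≤ n - 1 → j ≤ n - 1 →
      ¬(i = 0 ∧ 1 ≤ j ∧ j ≤ n - 3) → ¬(j = 0 ∧ 1 ≤ i ∧ i ≤ n - 3) →
      ¬(1 ≤ i ∧ i ≤ (r - 1) / 2 ∧ j = r - i) → ¬(1 ≤ j ∧ j ≤ (r - 1) / 2 ∧ i = r - j) →
      ¬(1 ≤ i ∧ i ≤ (n - 3) / 2 ∧ j = n - 2 - i) → ¬(1 ≤ j ∧ j ≤ (n - 3) / 2 ∧ i = n - 2 - j) →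
      ⁅x i, x j⁆ = 0) :
    lieIndex K L = 3 := by
  have hQ : IsQuasiFiliformBasis K n r x := ⟨hli, hsp, hbr1, hbr2, hbr3, hz⟩
  obtain ⟨f₀, hf₀⟩ := hQ.exists_finrank_lieStab_le_three (by omega) hno
  exact le_antisymm ((ciInf_le (OrderBot.bddBelow _) f₀).trans hf₀)
    (le_ciInf fun f => hQ.three_le_finrank_lieStab (by omega) hno (by omega) f)

theorem stmt16 (K : Type*) [Field K] [IsAlgClosed K] [CharZero K]
    (L : Type*) [LieRing L] [LieAlgebra K L]
    (n r : ℕ) (hn : 7 ≤ n) (hno : Odd n) (hro : Odd r) (hr1 : 3 ≤ r) (hr2 : r ≤ n - 4)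
    (x : ℕ → L)
    (hli : LinearIndependent K fun i : Fin n => x i.1)
    (hsp : Submodule.span K (Set.range fun i : Fin n => x i.1) = ⊤)
    (hbr1 : ∀ i, 1 ≤ i → i ≤ n - 3 → ⁅x 0, x i⁆ = x (i + 1))
    (hbr2 : ∀ i, 1 ≤ i → i ≤ (r - 1) / 2 → ⁅x i, x (r - i)⁆ = ((-1 : K)) ^ (i - 1) • x (n - 1))
    (hbr3 : ∀ i, 1 ≤ i → i ≤ (n - 3) / 2 →
      ⁅x i, x (n - 2 - i)⁆ = ((-1 : K)) ^ (i - 1) • x (n - 2))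
    (hz : ∀ i j, i ≤ n - 1 → j ≤ n - 1 →
      ¬(i = 0 ∧ 1 ≤ j ∧ j ≤ n - 3) → ¬(j = 0 ∧ 1 ≤ i ∧ i ≤ n - 3) →
      ¬(1 ≤ i ∧ i ≤ (r - 1) / 2 ∧ j = r - i) → ¬(1 ≤ j ∧ j ≤ (r - 1) / 2 ∧ i = r - j) →
      ¬(1 ≤ i ∧ i ≤ (n - 3) / 2 ∧ j = n - 2 - i) → ¬(1 ≤ j ∧ j ≤ (n - 3) / 2 ∧ i = n - 2 - j) →
      ⁅x i, x j⁆ = 0) :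
    lieIndex K L = 3 :=
  stmt16_general K L n r hn hno hr2 x hli hsp hbr1 hbr2 hbr3 hz
end

section
/- The (n+1)-dimensional solvable Lie algebra τ_{n+1,2} with basis {x_1,...,x_n,f}, where the nilradical brackets are [f, x_i] = x_i for i = 1,...,n−1 and all brackets among the x_i and with x_n vanish, has index n − 1. -/
open Module

/-!
If `A` is an abelian subspace, then for `a ∈ A` the functional `f ⁅a, ·⁆` vanishes on `A`, so
`a ↦ f ⁅a, ·⁆` maps `A` into the annihilator of `A`; its kernel lies in the stabilizer of `f`, whence
`dim stab f ≥ 2 dim A - dim L`. Here `x₁, …, xₙ` span such an `A`, giving index `≥ n - 1`.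
Conversely, if `f ⁅u, v⁆ ≠ 0` then `x ↦ (f ⁅x, u⁆, f ⁅x, v⁆)` maps onto `K²` and kills the
stabilizer, so `dim stab f ≤ dim L - 2`; take `f = x₁^*`, `u = x_{n+1}`, `v = x₁`.
-/

section

variable {K L : Type*} [Field K] [LieRing L] [LieAlgebra K L]

theorem lie_eq_zero_of_mem_span {s : Set L} (hs : ∀ a ∈ s, ∀ b ∈ s, ⁅a, b⁆ = 0) {a b : L}
    (ha : a ∈ Submodule.span K s) (hb : b ∈ Submodule.span K s) : ⁅a, b⁆ = 0 := by
  induction ha, hb using Submodule.span_induction₂ with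
  | mem_mem a b ha hb => exact hs a ha b hb
  | _ => simp_all [add_lie, lie_add, smul_lie, lie_smul]

def kirillovForm (f : Module.Dual K L) : L →ₗ[K] Module.Dual K L :=
  LinearMap.mk₂ K (fun x y => f ⁅x, y⁆) (by simp [add_lie]) (by simp [smul_lie])
    (by simp [lie_add]) (by simp [lie_smul])

@[simp]
theorem kirillovForm_apply (f : Module.Dual K L) (x y : L) : kirillovForm f x y = f ⁅x, y⁆ := rfl

theorem lieStab_eq_ker_kirillovForm (f : Module.Dual K L) :
    lieStab K f = LinearMap.ker (kirillovForm f) := by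
  ext x
  simp [lieStab, LinearMap.ext_iff]

theorem finrank_lieStab_add_two_le [FiniteDimensional K L] (f : Module.Dual K L) {u v : L}
    (huv : f ⁅u, v⁆ ≠ 0) : finrank K (lieStab K f) + 2 ≤ finrank K L := by
  let ψ : L →ₗ[K] K × K := ((kirillovForm f).flip u).prod ((kirillovForm f).flip v)
  have hsurj : Function.Surjective ψ := by
    rintro ⟨a, b⟩
    refine ⟨(b / f ⁅u, v⁆) • u - (a / f ⁅u, v⁆) • v, ?_⟩
    have hvu : f ⁅v, u⁆ = -f ⁅u, v⁆ := by rw [← lie_skew, map_neg]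
    simp [ψ, hvu, field]
  have hle : lieStab K f ≤ LinearMap.ker ψ := fun x hx => by
    simp [ψ, hx u, hx v]
  have hrank := LinearMap.finrank_range_add_finrank_ker ψ
  rw [LinearMap.range_eq_top.mpr hsurj, finrank_top, Module.finrank_prod,
    Module.finrank_self] at hrank
  have hker := Submodule.finrank_mono hle
  omega

theorem finrank_add_finrank_le_add_finrank_lieStab [FiniteDimensional K L] (f : Module.Dual K L)
    (A : Submodule K L) (hA : ∀ a ∈ A, ∀ b ∈ A, ⁅a, b⁆ = 0) :
    finrank K A + finrank K A ≤ finrank K L + finrank K (lieStab K f) := by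
  let ψ := kirillovForm f ∘ₗ A.subtype
  have hrange : LinearMap.range ψ ≤ A.dualAnnihilator := by
    rintro _ ⟨a, rfl⟩
    simp_all [Submodule.mem_dualAnnihilator, ψ]
  have hker : (LinearMap.ker ψ).map A.subtype ≤ lieStab K f := by
    rintro _ ⟨a, ha, rfl⟩
    simpa [lieStab_eq_ker_kirillovForm, ψ] using ha
  have hrank := LinearMap.finrank_range_add_finrank_ker ψ
  have hann := Subspace.finrank_add_finrank_dualAnnihilator_eq A
  have hrange_le := Submodule.finrank_mono hrange
  have hker_le := Submodule.finrank_mono hker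
  rw [Submodule.finrank_map_subtype_eq] at hker_le
  omega

theorem lieIndex_add_two_le [FiniteDimensional K L] (f : Module.Dual K L) {u v : L}
    (huv : f ⁅u, v⁆ ≠ 0) : lieIndex K L + 2 ≤ finrank K L :=
  le_trans (by gcongr; exact ciInf_le (OrderBot.bddBelow _) f) (finrank_lieStab_add_two_le f huv)

theorem finrank_add_finrank_le_add_lieIndex [FiniteDimensional K L] (A : Submodule K L)
    (hA : ∀ a ∈ A, ∀ b ∈ A, ⁅a, b⁆ = 0) :
    finrank K A + finrank K A ≤ finrank K L + lieIndex K L := by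
  obtain ⟨f, hf⟩ := Nat.sInf_mem (Set.range_nonempty fun f : Module.Dual K L =>
    finrank K (lieStab K f))
  rw [lieIndex, iInf, ← hf]
  exact finrank_add_finrank_le_add_finrank_lieStab f A hA

end

theorem stmt18 (K : Type*) [RCLike K]
    (L : Type*) [LieRing L] [LieAlgebra K L]
    (n : ℕ) (hn : 2 ≤ n)
    (x : ℕ → L)
    (hli : LinearIndependent K fun i : Fin (n + 1) => x (i.1 + 1))
    (hsp : Submodule.span K (Set.range fun i : Fin (n + 1) => x (i.1 + 1)) = ⊤)
    (hbr : ∀ i, 1 ≤ i → i ≤ n - 1 → ⁅x (n + 1), x i⁆ = x i)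
    (hz : ∀ i j, 1 ≤ i → i ≤ n + 1 → 1 ≤ j → j ≤ n + 1 →
      ¬(i = n + 1 ∧ 1 ≤ j ∧ j ≤ n - 1) → ¬(j = n + 1 ∧ 1 ≤ i ∧ i ≤ n - 1) →
      ⁅x i, x j⁆ = 0) :
    lieIndex K L = n - 1 := by
  let B := Basis.mk hli hsp.ge
  have : FiniteDimensional K L := B.finiteDimensional_of_finite
  have hdim : finrank K L = n + 1 := by simp [finrank_eq_card_basis B]
  let A := Submodule.span K (Set.range fun i : Fin n => x (i.1 + 1))
  have hA : finrank K A = n :=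
    (finrank_span_eq_card (hli.comp _ (Fin.castSucc_injective n))).trans (Fintype.card_fin n)
  have hAab : ∀ a ∈ A, ∀ b ∈ A, ⁅a, b⁆ = 0 := by
    refine fun a ha b hb => lie_eq_zero_of_mem_span ?_ ha hb
    rintro _ ⟨i, rfl⟩ _ ⟨j, rfl⟩
    exact hz _ _ (by omega) (by omega) (by omega) (by omega) (by omega) (by omega)
  have hx1 : B.coord 0 ⁅x (n + 1), x 1⁆ ≠ 0 := by
    have hB0 : B 0 = x 1 := Basis.mk_apply hli hsp.ge 0
    rw [hbr 1 le_rfl (by omega), ← hB0]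
    simp
  have hlow := finrank_add_finrank_le_add_lieIndex A hAab
  have hup := lieIndex_add_two_le (B.coord 0) hx1
  omega
end
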